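/- Let k ≥ 1 and π ∈ (0,1). For the process T(k,π) with uniform initial distribution, the limit Shannon entropy h_∞ = lim_{m→∞} h_m exists and equals −(π log₂ π + (1−π) log₂(1−π)). The same holds for T̄(k,π). -/
import Mathlib


mutual
/-- `tf0 π u` is the conditional probability `t_{k,π}(0|u)` for the two-faced
process `T(k,π)`, where `k = u.length ≥ 1` (bits: `false = 0`, `true = 1`,
words written with the most recent conditioning bit last, so `0u` is `false :: u`). -/
noncomputable def tf0 (π : ℝ) : List Bool → ℝ
  | [] => 1 / 2
  | [false] => π
  | [true] => 1 - π
  | false :: b :: u => tf0 π (b :: u)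
  | true :: b :: u => tb0 π (b :: u)

/-- `tb0 π u` is `t̄_{k,π}(0|u)` for the process `T̄(k,π)`. -/
noncomputable def tb0 (π : ℝ) : List Bool → ℝ
  | [] => 1 / 2
  | [false] => 1 - π
  | [true] => π
  | false :: b :: u => tb0 π (b :: u)
  | true :: b :: u => tf0 π (b :: u)
end

/-- `tface π w u = t_{k,π}(w|u)`, using `t(1|u) = 1 - t(0|u)`. -/
noncomputable def tface (π : ℝ) (w : Bool) (u : List Bool) : ℝ :=
  if w then 1 - tf0 π u else tf0 π u

/-- `tbarface π w u = t̄_{k,π}(w|u)`. -/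
noncomputable def tbarface (π : ℝ) (w : Bool) (u : List Bool) : ℝ :=
  if w then 1 - tb0 π u else tb0 π u

/-- XOR of the bits of a binary word. -/
def xorWord (u : List Bool) : Bool := u.foldl xor false

/-- `pfull κ k u` is the probability that the process with transition kernel
`κ = t_{k,π}` (or `t̄_{k,π}`) and uniform initial distribution starts with the word `u`,
for `|u| ≥ k`: `p(u) = 2^{-k} · ∏_{i=k+1}^{|u|} κ(u_i | u_{i-k}…u_{i-1})`. -/
noncomputable def pfull (κ : Bool → List Bool → ℝ) (k : ℕ) (u : List Bool) : ℝ :=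
  ((2 : ℝ) ^ k)⁻¹ *
    ∏ j ∈ Finset.Ico k u.length, κ (u.getD j false) ((u.drop (j - k)).take k)

/-- `pword κ k u` is the probability of starting with the word `u`: for `|u| ≥ k` it is
`pfull κ k u`, and for `|u| < k` it is `Σ_{w ∈ {0,1}^{k-|u|}} p(uw)` (each word `uw` has
length exactly `k`, so `p(uw) = pfull κ k (uw)`). -/
noncomputable def pword (κ : Bool → List Bool → ℝ) (k : ℕ) (u : List Bool) : ℝ :=
  if k ≤ u.length then pfull κ k u
  else ∑ w : Fin (k - u.length) → Bool, pfull κ k (u ++ List.ofFn w)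

/-- The `m`-order conditional Shannon entropy
`h_m = -Σ_{u ∈ {0,1}^{m-1}} p(u) Σ_{v ∈ {0,1}} (p(uv)/p(u)) log₂ (p(uv)/p(u))`. -/
noncomputable def condEntropy (κ : Bool → List Bool → ℝ) (k m : ℕ) : ℝ :=
  - ∑ u : Fin (m - 1) → Bool,
      pword κ k (List.ofFn u) *
        ∑ v : Bool,
          (pword κ k (List.ofFn u ++ [v]) / pword κ k (List.ofFn u)) *
            Real.logb 2 (pword κ k (List.ofFn u ++ [v]) / pword κ k (List.ofFn u))

section Aux

private lemma foldl_xor_eq (t : List Bool) : ∀ a : Bool, t.foldl xor a = xor a (t.foldl xor false) := by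
  induction t with
  | nil => intro a; simp
  | cons b u ih =>
    intro a
    simp only [List.foldl_cons]
    rw [ih (xor a b), ih (xor false b)]
    cases a <;> cases b <;> simp

private lemma xorWord_cons (a : Bool) (t : List Bool) :
    xorWord (a :: t) = xor a (xorWord t) := by
  show t.foldl xor (xor false a) = _
  rw [Bool.false_xor, foldl_xor_eq]
  rfl

private lemma tf0_tb0_eq (π : ℝ) : ∀ s : List Bool, s ≠ [] →
    tf0 π s = (if xorWord s then 1 - π else π) ∧
      tb0 π s = (if xorWord s then π else 1 - π) := by
  intro s
  induction s with
  | nil => simp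
  | cons a t ih =>
    intro _
    cases t with
    | nil => cases a <;> simp [tf0, tb0, xorWord]
    | cons b u =>
      obtain ⟨h1, h2⟩ := ih (by simp)
      cases a <;>
        simp only [tf0, tb0, xorWord_cons, h1, h2, Bool.false_xor, Bool.true_xor] <;>
        cases xorWord (b :: u) <;> simp

variable {π : ℝ} {κ : Bool → List Bool → ℝ}

private lemma kappa_true (hκ : κ = tface π ∨ κ = tbarface π) (s : List Bool) :
    κ true s = 1 - κ false s := by
  rcases hκ with rfl | rfl <;> simp [tface, tbarface]

private lemma kappa_sum (hκ : κ = tface π ∨ κ = tbarface π) (s : List Bool) :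
    κ false s + κ true s = 1 := by
  rw [kappa_true hκ]; ring

private lemma kappa_false_cases (hκ : κ = tface π ∨ κ = tbarface π)
    {s : List Bool} (hs : s ≠ []) : κ false s = π ∨ κ false s = 1 - π := by
  obtain ⟨h1, h2⟩ := tf0_tb0_eq π s hs
  rcases hκ with rfl | rfl
  · show tf0 π s = π ∨ tf0 π s = 1 - π
    rw [h1]; split <;> tauto
  · show tb0 π s = π ∨ tb0 π s = 1 - π
    rw [h2]; split <;> tauto

private lemma kappa_pos (hπ : π ∈ Set.Ioo (0 : ℝ) 1)
    (hκ : κ = tface π ∨ κ = tbarface π) {s : List Bool} (hs : s ≠ []) (v : Bool) :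
    0 < κ v s := by
  obtain ⟨h0, h1⟩ := hπ
  have hf : 0 < κ false s ∧ κ false s < 1 := by
    rcases kappa_false_cases hκ hs with h | h <;> rw [h] <;> exact ⟨by linarith, by linarith⟩
  cases v
  · exact hf.1
  · rw [kappa_true hκ]; linarith [hf.2]

private lemma kappa_entropy (hπ : π ∈ Set.Ioo (0 : ℝ) 1)
    (hκ : κ = tface π ∨ κ = tbarface π) {s : List Bool} (hs : s ≠ []) :
    ∑ v : Bool, κ v s * Real.logb 2 (κ v s)
      = π * Real.logb 2 π + (1 - π) * Real.logb 2 (1 - π) := by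
  rw [Fintype.sum_bool, kappa_true hκ]
  rcases kappa_false_cases hκ hs with h | h <;> rw [h] <;> ring_nf

private lemma pfull_snoc (κ : Bool → List Bool → ℝ) (k : ℕ) (u : List Bool) (v : Bool)
    (hku : k ≤ u.length) :
    pfull κ k (u ++ [v]) = pfull κ k u * κ v ((u.drop (u.length - k)).take k) := by
  unfold pfull
  rw [List.length_append, List.length_singleton,
    Finset.prod_Ico_succ_top (by omega : k ≤ u.length)]
  have htop : κ ((u ++ [v]).getD u.length false) (((u ++ [v]).drop (u.length - k)).take k)
      = κ v ((u.drop (u.length - k)).take k) := by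
    have hg : (u ++ [v]).getD u.length false = v := by
      rw [List.getD_append_right u [v] false u.length le_rfl]
      simp
    have hd : ((u ++ [v]).drop (u.length - k)).take k = (u.drop (u.length - k)).take k := by
      rw [List.drop_append_of_le_length (by omega : u.length - k ≤ u.length),
        List.take_append_of_le_length (by simp [List.length_drop]; omega)]
    rw [hg, hd]
  have hrest : ∀ j ∈ Finset.Ico k u.length,
      κ ((u ++ [v]).getD j false) (((u ++ [v]).drop (j - k)).take k)
        = κ (u.getD j false) ((u.drop (j - k)).take k) := by
    intro j hj
    simp only [Finset.mem_Ico] at hj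
    rw [List.getD_append u [v] false j (by omega),
      List.drop_append_of_le_length (by omega : j - k ≤ u.length),
      List.take_append_of_le_length (by simp [List.length_drop]; omega)]
  rw [Finset.prod_congr rfl hrest, htop]
  ring

private lemma take_drop_ne_nil {k : ℕ} (hk : 1 ≤ k) {u : List Bool} {j : ℕ}
    (hj : j < u.length) : (u.drop (j - k)).take k ≠ [] := by
  have : ((u.drop (j - k)).take k).length ≠ 0 := by
    simp only [List.length_take, List.length_drop]; omega
  exact fun h => this (by rw [h]; rfl)

private lemma pfull_pos (hπ : π ∈ Set.Ioo (0 : ℝ) 1)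
    (hκ : κ = tface π ∨ κ = tbarface π) {k : ℕ} (hk : 1 ≤ k)
    {u : List Bool} : 0 < pfull κ k u := by
  unfold pfull
  refine mul_pos (by positivity) (Finset.prod_pos ?_)
  intro j hj
  simp only [Finset.mem_Ico] at hj
  exact kappa_pos hπ hκ (take_drop_ne_nil hk hj.2) _

private lemma sum_pfull_eq_one (hκ : κ = tface π ∨ κ = tbarface π) {k : ℕ} :
    ∀ n, k ≤ n → ∑ u : Fin n → Bool, pfull κ k (List.ofFn u) = 1 := by
  refine Nat.le_induction ?_ ?_
  · have : ∀ u : Fin k → Bool, pfull κ k (List.ofFn u) = ((2 : ℝ) ^ k)⁻¹ := by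
      intro u
      unfold pfull
      rw [List.length_ofFn, Finset.Ico_self, Finset.prod_empty, mul_one]
    rw [Finset.sum_congr rfl (fun u _ => this u), Finset.sum_const, Finset.card_univ]
    simp [Fintype.card_fun]
  · intro n hn ih
    have hofn : ∀ (u : Fin n → Bool) (v : Bool),
        List.ofFn (Fin.snoc u v : Fin (n + 1) → Bool) = List.ofFn u ++ [v] := by
      intro u v
      rw [List.ofFn_succ', List.concat_eq_append]
      simp only [Fin.snoc_castSucc, Fin.snoc_last]
    calc ∑ f : Fin (n + 1) → Bool, pfull κ k (List.ofFn f)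
        = ∑ p : Bool × (Fin n → Bool),
            pfull κ k (List.ofFn ((Fin.snocEquiv (fun _ => Bool)) p)) :=
          (Equiv.sum_comp (Fin.snocEquiv (fun _ => Bool))
            (fun f => pfull κ k (List.ofFn f))).symm
      _ = ∑ v : Bool, ∑ u : Fin n → Bool, pfull κ k (List.ofFn u ++ [v]) := by
          rw [Fintype.sum_prod_type]
          exact Finset.sum_congr rfl fun v _ => Finset.sum_congr rfl fun u _ => by
            rw [show ((Fin.snocEquiv (fun _ => Bool)) (v, u)) = Fin.snoc u v from rfl,
              hofn u v]
      _ = ∑ u : Fin n → Bool, ∑ v : Bool, pfull κ k (List.ofFn u ++ [v]) :=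
          Finset.sum_comm
      _ = 1 := by
          rw [← ih]
          refine Finset.sum_congr rfl fun u _ => ?_
          have hl : k ≤ (List.ofFn u).length := by rw [List.length_ofFn]; exact hn
          rw [Fintype.sum_bool, pfull_snoc κ k _ true hl, pfull_snoc κ k _ false hl,
            ← mul_add, add_comm (κ true _), kappa_sum hκ, mul_one]

private lemma condEntropy_eq (hπ : π ∈ Set.Ioo (0 : ℝ) 1)
    (hκ : κ = tface π ∨ κ = tbarface π) {k : ℕ} (hk : 1 ≤ k)
    {m : ℕ} (hm : k + 1 ≤ m) :
    condEntropy κ k m = -(π * Real.logb 2 π + (1 - π) * Real.logb 2 (1 - π)) := by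
  have hn : k ≤ m - 1 := by omega
  unfold condEntropy
  have key : ∀ u : Fin (m - 1) → Bool,
      pword κ k (List.ofFn u) *
        ∑ v : Bool,
          (pword κ k (List.ofFn u ++ [v]) / pword κ k (List.ofFn u)) *
            Real.logb 2 (pword κ k (List.ofFn u ++ [v]) / pword κ k (List.ofFn u))
      = pfull κ k (List.ofFn u) *
          (π * Real.logb 2 π + (1 - π) * Real.logb 2 (1 - π)) := by
    intro u
    set L := List.ofFn u with hL
    have hlen : L.length = m - 1 := by rw [hL, List.length_ofFn]
    have hkL : k ≤ L.length := by omega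
    have hp1 : pword κ k L = pfull κ k L := if_pos hkL
    have hp2 : ∀ v : Bool, pword κ k (L ++ [v]) = pfull κ k (L ++ [v]) := fun v =>
      if_pos (by rw [List.length_append]; omega)
    have hne : pfull κ k L ≠ 0 := ne_of_gt (pfull_pos hπ hκ hk)
    have hs : (L.drop (L.length - k)).take k ≠ [] := by
      have : ((L.drop (L.length - k)).take k).length ≠ 0 := by
        simp only [List.length_take, List.length_drop]; omega
      exact fun h => this (by rw [h]; rfl)
    have hratio : ∀ v : Bool,
        pword κ k (L ++ [v]) / pword κ k L = κ v ((L.drop (L.length - k)).take k) := by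
      intro v
      rw [hp1, hp2, pfull_snoc κ k L v hkL, mul_comm, mul_div_assoc, div_self hne, mul_one]
    simp only [hratio]
    rw [hp1, kappa_entropy hπ hκ hs]
  rw [Finset.sum_congr rfl (fun u _ => key u), ← Finset.sum_mul,
    sum_pfull_eq_one hκ (m - 1) hn, one_mul]

end Aux

/-- for the process `T(k,π)` (or `T̄(k,π)`) with uniform initial
distribution, the limit Shannon entropy `h_∞ = lim_{m→∞} h_m` exists and equals
`-(π log₂ π + (1-π) log₂ (1-π))`. -/
theorem two_faced_limit_entropy (k : ℕ) (hk : 1 ≤ k) (π : ℝ)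
    (hπ : π ∈ Set.Ioo (0 : ℝ) 1)
    (κ : Bool → List Bool → ℝ) (hκ : κ = tface π ∨ κ = tbarface π) :
    Filter.Tendsto (fun m : ℕ => condEntropy κ k m) Filter.atTop
      (nhds (-(π * Real.logb 2 π + (1 - π) * Real.logb 2 (1 - π)))) := by
  have heq : (fun _ : ℕ => -(π * Real.logb 2 π + (1 - π) * Real.logb 2 (1 - π)))
      =ᶠ[Filter.atTop] fun m : ℕ => condEntropy κ k m :=
    Filter.eventually_atTop.2 ⟨k + 1, fun m hm => (condEntropy_eq hπ hκ hk hm).symm⟩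
  exact Filter.Tendsto.congr' heq tendsto_const_nhds
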